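/- Under the Benjamini–Yekutieli step-up procedure with threshold k = max{ j : π_{(j)} ≤ (j/d) · α / Σ_{l=1}^d l^{-1} }, if the p-values π_1,...,π_d corresponding to the d₀ true null hypotheses are each stochastically larger than or equal to uniform on [0,1], then for any dependence structure among the p-values the false discovery rate of rejecting hypotheses with the k smallest p-values is at most (d₀/d)·α ≤ α. -/

import Mathlib

/-!
Put `c = α / (d H)`, so that the step-up threshold is `thr j = j c`. The step-up index `k`
satisfies `k ≤ R`, hence a rejected true null `i` contributes at most `1 / max k 1` to
`V / max R 1`, and this is at most `φ(π i)`, where `φ(x) = 1/ℓ` for `x ∈ ((ℓ-1)c, ℓc]`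
(`1 ≤ ℓ ≤ d`). The bound involves `π i` alone, which is why no assumption on the dependence
between p-values is needed. Writing `φ` as the layer sum `∑ ℓ, w ℓ • 1{x ≤ ℓc}` with
`w ℓ = 1/ℓ - 1/(ℓ+1)` (and `w d = 1/d`), super-uniformity gives
`E φ(π i) ≤ c ∑ ℓ, ℓ w ℓ = c H = α / d`, and summing over the `d₀` true nulls gives `d₀ α / d`.
-/

open MeasureTheory Finset

namespace BenjaminiYekutieli

noncomputable def invUpTo (d ℓ : ℕ) : ℝ := if ℓ ≤ d then (ℓ : ℝ)⁻¹ else 0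

noncomputable def weight (d ℓ : ℕ) : ℝ := invUpTo d ℓ - invUpTo d (ℓ + 1)

lemma weight_nonneg {d ℓ : ℕ} (hℓ : 1 ≤ ℓ) : 0 ≤ weight d ℓ := by
  have hℓ' : (0 : ℝ) < ℓ := by exact_mod_cast hℓ
  unfold weight invUpTo
  split_ifs
  · rw [sub_nonneg]; gcongr; simp
  · simp only [sub_zero]; positivity
  · omega
  · simp

lemma sum_Icc_weight {d m : ℕ} (hmd : m ≤ d) : ∑ ℓ ∈ Icc m d, weight d ℓ = (m : ℝ)⁻¹ := by
  calc ∑ ℓ ∈ Icc m d, weight d ℓ = -∑ ℓ ∈ Icc m d, (invUpTo d (ℓ + 1) - invUpTo d ℓ) := by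
        simp [weight]
    _ = (m : ℝ)⁻¹ := by
        rw [sum_Icc_sub hmd]
        simp [invUpTo, hmd]

lemma sum_Icc_mul_sub_succ (f : ℕ → ℝ) (n : ℕ) :
    ∑ ℓ ∈ Icc 1 n, ℓ * (f ℓ - f (ℓ + 1)) = ∑ ℓ ∈ Icc 1 n, f ℓ - n * f (n + 1) := by
  induction n with
  | zero => simp
  | succ n ih =>
    rw [sum_Icc_succ_top (by omega), sum_Icc_succ_top (by omega), ih]
    push_cast
    ring

lemma sum_Icc_mul_weight (d : ℕ) : ∑ ℓ ∈ Icc 1 d, ℓ * weight d ℓ = ∑ ℓ ∈ Icc 1 d, (ℓ : ℝ)⁻¹ := by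
  simp only [weight, sum_Icc_mul_sub_succ]
  simp only [invUpTo, if_neg (Nat.not_succ_le_self d), mul_zero, sub_zero]
  exact sum_congr rfl fun ℓ hℓ => if_pos (mem_Icc.1 hℓ).2

lemma one_le_sum_Icc_inv {d : ℕ} (hd : 1 ≤ d) : 1 ≤ ∑ ℓ ∈ Icc 1 d, (ℓ : ℝ)⁻¹ := by
  simpa using single_le_sum (f := fun ℓ : ℕ => (ℓ : ℝ)⁻¹) (fun ℓ _ => by positivity)
    (mem_Icc.2 ⟨le_rfl, hd⟩)

noncomputable def stepBound (d : ℕ) (c x : ℝ) : ℝ :=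
  ∑ ℓ ∈ Icc 1 d, (Set.Iic ((ℓ : ℝ) * c)).indicator (fun _ => weight d ℓ) x

lemma stepBound_nonneg (d : ℕ) (c x : ℝ) : 0 ≤ stepBound d c x :=
  sum_nonneg fun _ hℓ => Set.indicator_nonneg (fun _ _ => weight_nonneg (mem_Icc.1 hℓ).1) x

lemma inv_le_stepBound {d m : ℕ} {c x : ℝ} (hm : 1 ≤ m) (hmd : m ≤ d) (hx : x ≤ m * c)
    (hc : 0 ≤ c) : (m : ℝ)⁻¹ ≤ stepBound d c x := by
  rw [← sum_Icc_weight hmd]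
  calc ∑ ℓ ∈ Icc m d, weight d ℓ
      = ∑ ℓ ∈ Icc m d, (Set.Iic ((ℓ : ℝ) * c)).indicator (fun _ => weight d ℓ) x := by
        refine sum_congr rfl fun ℓ hℓ => ?_
        rw [Set.indicator_of_mem]
        exact hx.trans (by gcongr; exact_mod_cast (mem_Icc.1 hℓ).1)
    _ ≤ stepBound d c x :=
        sum_le_sum_of_subset_of_nonneg (Icc_subset_Icc_left hm) fun ℓ hℓ _ =>
          Set.indicator_nonneg (fun _ _ => weight_nonneg (mem_Icc.1 hℓ).1) x

lemma card_filter_div_le_sum_stepBound {ι : Type*} (s : Finset ι) (p : ι → ℝ) {d k r : ℕ}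
    {c : ℝ} (hd : 1 ≤ d) (hkd : k ≤ d) (hkr : k ≤ r) (hc : 0 ≤ c) :
    (#(s.filter fun i => p i ≤ k * c) : ℝ) / max (r : ℝ) 1 ≤ ∑ i ∈ s, stepBound d c (p i) := by
  rw [card_filter, Nat.cast_sum, sum_div]
  refine sum_le_sum fun i _ => ?_
  split_ifs with hi
  · have hkr' : (max k 1 : ℕ) ≤ max (r : ℝ) 1 := by
      exact_mod_cast max_le_max_right 1 hkr
    calc ((1 : ℕ) : ℝ) / max (r : ℝ) 1 ≤ ((max k 1 : ℕ) : ℝ)⁻¹ := by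
          rw [Nat.cast_one, one_div]
          exact inv_anti₀ (by positivity) hkr'
      _ ≤ stepBound d c (p i) :=
          inv_le_stepBound (le_max_right k 1) (max_le hkd hd)
            (hi.trans (by gcongr; exact_mod_cast le_max_left k 1)) hc
  · rw [Nat.cast_zero, zero_div]
    exact stepBound_nonneg d c (p i)

lemma stepBound_comp_eq {Ω : Type*} (X : Ω → ℝ) (d : ℕ) (c : ℝ) :
    (fun ω => stepBound d c (X ω)) =
      fun ω => ∑ ℓ ∈ Icc 1 d, {ω | X ω ≤ ℓ * c}.indicator (fun _ => weight d ℓ) ω :=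
  rfl

section Integral

variable {Ω : Type*} [MeasurableSpace Ω] {μ : Measure Ω} {X : Ω → ℝ} {d : ℕ} {c : ℝ}

lemma integrable_stepBound_comp [IsFiniteMeasure μ] (hX : Measurable X) :
    Integrable (fun ω => stepBound d c (X ω)) μ := by
  rw [stepBound_comp_eq]
  exact integrable_finsetSum _ fun ℓ _ =>
    (integrable_const _).indicator (measurableSet_le hX measurable_const)

lemma integral_stepBound_comp_le [IsFiniteMeasure μ] (hX : Measurable X) (hc : 0 ≤ c)
    (hX_le : ∀ ℓ ∈ Icc 1 d, μ {ω | X ω ≤ ℓ * c} ≤ ENNReal.ofReal (ℓ * c)) :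
    ∫ ω, stepBound d c (X ω) ∂μ ≤ c * ∑ ℓ ∈ Icc 1 d, (ℓ : ℝ)⁻¹ := by
  rw [stepBound_comp_eq, integral_finsetSum _ fun ℓ _ =>
    (integrable_const _).indicator (measurableSet_le hX measurable_const)]
  calc ∑ ℓ ∈ Icc 1 d, ∫ ω, {ω | X ω ≤ ℓ * c}.indicator (fun _ => weight d ℓ) ω ∂μ
      = ∑ ℓ ∈ Icc 1 d, μ.real {ω | X ω ≤ ℓ * c} * weight d ℓ := by
        refine sum_congr rfl fun ℓ _ => ?_
        rw [integral_indicator_const _ (measurableSet_le hX measurable_const), smul_eq_mul]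
    _ ≤ ∑ ℓ ∈ Icc 1 d, ℓ * c * weight d ℓ := by
        refine sum_le_sum fun ℓ hℓ => ?_
        gcongr
        · exact weight_nonneg (mem_Icc.1 hℓ).1
        · exact ENNReal.toReal_le_of_le_ofReal (by positivity) (hX_le ℓ hℓ)
    _ = c * ∑ ℓ ∈ Icc 1 d, (ℓ : ℝ)⁻¹ := by
        rw [← sum_Icc_mul_weight, mul_sum]
        exact sum_congr rfl fun ℓ _ => by ring

end Integral

lemma sup_id_mem_filter (n : ℕ) (N : ℕ → ℕ) :
    ((range (n + 1)).filter fun j => j ≤ N j).sup id ∈ (range (n + 1)).filter fun j => j ≤ N j := by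
  obtain ⟨b, hb, hsup⟩ := exists_mem_eq_sup ((range (n + 1)).filter fun j => j ≤ N j)
    ⟨0, mem_filter.2 ⟨mem_range.2 n.succ_pos, Nat.zero_le _⟩⟩ id
  exact hsup ▸ hb

end BenjaminiYekutieli

open BenjaminiYekutieli

/-- the Benjamini–Yekutieli step-up procedure with harmonic correction
controls the FDR at level (d₀/d)·α ≤ α under arbitrary dependence, provided the
p-values of true nulls are stochastically larger than uniform. -/
theorem stmt_18 {Ω : Type*} [MeasurableSpace Ω] (ℙ : Measure Ω) [IsProbabilityMeasure ℙ]
    (d d0 : ℕ) (hd : 1 ≤ d) (α : ℝ) (hα0 : 0 < α) (hα1 : α ≤ 1)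
    (π : Fin d → Ω → ℝ) (hmeas : ∀ i, Measurable (π i))
    (trueNull : Finset (Fin d)) (hd0 : trueNull.card = d0)
    (hnull : ∀ i ∈ trueNull, ∀ t : ℝ, 0 ≤ t → t ≤ 1 →
      ℙ {ω | π i ω ≤ t} ≤ ENNReal.ofReal t)
    (H : ℝ) (hH : H = ∑ l ∈ Finset.Icc 1 d, (1 : ℝ) / l)
    (thr : ℕ → ℝ) (hthr : ∀ j, thr j = (j : ℝ) / d * α / H)
    (K : Ω → ℕ)
    (hK : ∀ ω, K ω = ((Finset.range (d + 1)).filter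
      (fun j => j ≤ (Finset.univ.filter (fun i : Fin d => π i ω ≤ thr j)).card)).sup id)
    (V R : Ω → ℕ)
    (hV : ∀ ω, V ω = (trueNull.filter (fun i => π i ω ≤ thr (K ω))).card)
    (hR : ∀ ω, R ω = (Finset.univ.filter (fun i : Fin d => π i ω ≤ thr (K ω))).card) :
    (∫ ω, (V ω : ℝ) / max (R ω : ℝ) 1 ∂ℙ) ≤ (d0 : ℝ) / d * α ∧
    (d0 : ℝ) / d * α ≤ α := by
  simp only [one_div] at hH
  have hd' : (0 : ℝ) < d := by exact_mod_cast hd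
  have hH1 : 1 ≤ H := hH ▸ one_le_sum_Icc_inv hd
  have hH0 : 0 < H := one_pos.trans_le hH1
  set c := α / (d * H) with hc_def
  have hc : 0 ≤ c := by positivity
  have hthr_eq : ∀ j, thr j = j * c := fun j => by rw [hthr, hc_def]; field_simp
  have hdc : d * c ≤ 1 := by
    calc d * c = α / H := by rw [hc_def]; field_simp
      _ ≤ α := div_le_self hα0.le hH1
      _ ≤ 1 := hα1
  have hpointwise : ∀ ω, (V ω : ℝ) / max (R ω : ℝ) 1 ≤ ∑ i ∈ trueNull, stepBound d c (π i ω) := by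
    intro ω
    have hKmem := sup_id_mem_filter d fun j => #(univ.filter fun i => π i ω ≤ thr j)
    rw [← hK, mem_filter, mem_range, ← hR] at hKmem
    rw [hV, hthr_eq]
    exact card_filter_div_le_sum_stepBound _ _ hd (by omega) hKmem.2 hc
  have hnull_bound : ∀ i ∈ trueNull, ∫ ω, stepBound d c (π i ω) ∂ℙ ≤ c * H := by
    intro i hi
    refine hH ▸ integral_stepBound_comp_le (hmeas i) hc fun ℓ hℓ => hnull i hi _ (by positivity) ?_
    have hℓd : (ℓ : ℝ) ≤ d := by exact_mod_cast (mem_Icc.1 hℓ).2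
    exact (mul_le_mul_of_nonneg_right hℓd hc).trans hdc
  have hintegrable : ∀ i ∈ trueNull, Integrable (fun ω => stepBound d c (π i ω)) ℙ :=
    fun i _ => integrable_stepBound_comp (hmeas i)
  refine ⟨?_, ?_⟩
  · calc ∫ ω, (V ω : ℝ) / max (R ω : ℝ) 1 ∂ℙ
        ≤ ∫ ω, ∑ i ∈ trueNull, stepBound d c (π i ω) ∂ℙ :=
          integral_mono_of_nonneg (.of_forall fun ω => by positivity)
            (integrable_finsetSum _ hintegrable) (.of_forall hpointwise)
      _ = ∑ i ∈ trueNull, ∫ ω, stepBound d c (π i ω) ∂ℙ := integral_finsetSum _ hintegrable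
      _ ≤ ∑ _i ∈ trueNull, c * H := sum_le_sum hnull_bound
      _ = d0 / d * α := by rw [sum_const, hd0, nsmul_eq_mul, hc_def]; field_simp
  · have hd0d : (d0 : ℝ) ≤ d := by
      rw [← hd0]
      exact_mod_cast card_le_univ trueNull |>.trans_eq (Fintype.card_fin d)
    exact mul_le_of_le_one_left hα0.le (div_le_one_of_le₀ hd0d hd'.le)
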